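/- If (a,b) is a negaperiodic Golay pair of length v, and A, B are the negacyclic matrices of order v with first rows a and b respectively, then the 2v × 2v block matrix H = [[A, B], [-B^T, A^T]] is a Hadamard matrix. Conversely, every Hadamard matrix of this form arises from a negaperiodic Golay pair, and the correspondence is a bijection. -/
import Mathlib


/-- Ordinary autocorrelation. -/
def AF (v : ℕ) (a : ℕ → ℤ) (k : ℕ) : ℤ :=
  ∑ i ∈ Finset.range (v - k), a i * a (i + k)

/-- Negaperiodic autocorrelation `NAF_a(k) = AF_a(k) - AF_a(v-k)`. -/
def NAF (v : ℕ) (a : ℕ → ℤ) (k : ℕ) : ℤ :=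
  AF v a k - AF v a (v - k)

/-- Extend a finitely indexed sequence to `ℕ` by zero. -/
def ext {v : ℕ} (a : Fin v → ℤ) : ℕ → ℤ :=
  fun i => if h : i < v then a ⟨i, h⟩ else 0

/-- `(a,b)` is a negaperiodic Golay pair of length `v`. -/
def IsNGPair {v : ℕ} (a b : Fin v → ℤ) : Prop :=
  (∀ i, a i = 1 ∨ a i = -1) ∧ (∀ i, b i = 1 ∨ b i = -1) ∧
  (∀ k, 0 < k → k < v → NAF v (ext a) k + NAF v (ext b) k = 0)

/-- The negacyclic shift matrix `N` of order `v`. -/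
def negaShift (v : ℕ) : Matrix (Fin v) (Fin v) ℤ :=
  Matrix.of fun i j => if (i : ℕ) + 1 = (j : ℕ) then 1
    else if (i : ℕ) = v - 1 ∧ (j : ℕ) = 0 then -1 else 0

/-- The negacyclic matrix of order `v` with first row `a`. -/
def negacyclic {v : ℕ} (a : Fin v → ℤ) : Matrix (Fin v) (Fin v) ℤ :=
  ∑ i ∈ Finset.range v, ext a i • (negaShift v) ^ i

/-- The 2N-type block matrix `[[A, B], [-Bᵀ, Aᵀ]]` built from first rows `a`, `b`. -/
def twoNBlock {v : ℕ} (a b : Fin v → ℤ) : Matrix (Fin v ⊕ Fin v) (Fin v ⊕ Fin v) ℤ :=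
  Matrix.fromBlocks (negacyclic a) (negacyclic b)
    (-(negacyclic b).transpose) (negacyclic a).transpose

/-- `M` is a Hadamard matrix of order `2v`. -/
def IsHadamard2v {v : ℕ} (M : Matrix (Fin v ⊕ Fin v) (Fin v ⊕ Fin v) ℤ) : Prop :=
  (∀ i j, M i j = 1 ∨ M i j = -1) ∧
  M * M.transpose = ((2 * v : ℕ) : ℤ) • (1 : Matrix (Fin v ⊕ Fin v) (Fin v ⊕ Fin v) ℤ)

lemma ext_lt {v : ℕ} (a : Fin v → ℤ) (t : ℕ) (h : t < v) : ext a t = a ⟨t, h⟩ := dif_pos h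

open Matrix Finset

section NGAux
-- ===== entry formulas for powers of the negacyclic shift =====

lemma negaShift_apply_zero (v : ℕ) (hv : 0 < v) (i : Fin v) (hi : (i:ℕ) + 1 = v) :
    negaShift v i ⟨0, hv⟩ = -1 := by
  show (if (i:ℕ) + 1 = 0 then (1:ℤ) else if (i:ℕ) = v - 1 ∧ (0:ℕ) = 0 then -1 else 0) = -1
  rw [if_neg (by omega), if_pos ⟨by omega, rfl⟩]

lemma negaShift_apply_succ (v : ℕ) (i : Fin v) (hi : (i:ℕ) + 1 < v) :
    negaShift v i ⟨(i:ℕ)+1, hi⟩ = 1 := by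
  show (if (i:ℕ) + 1 = (i:ℕ) + 1 then (1:ℤ) else _) = 1
  rw [if_pos rfl]

lemma negaShift_apply_ne_succ (v : ℕ) (hv : 0 < v) (i m : Fin v)
    (h : (m:ℕ) ≠ ((i:ℕ)+1) % v) : negaShift v i m = 0 := by
  have hiv := i.isLt
  have hmv := m.isLt
  simp only [negaShift, Matrix.of_apply]
  rcases Nat.lt_or_ge ((i:ℕ)+1) v with h1 | h1
  · rw [Nat.mod_eq_of_lt h1] at h
    rw [if_neg (fun hh => h hh.symm), if_neg (by rintro ⟨h2, h3⟩; omega)]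
  · have h2 : (i:ℕ) + 1 = v := by omega
    rw [h2, Nat.mod_self] at h
    rw [if_neg (by omega), if_neg (by rintro ⟨h3, h4⟩; exact h h4)]

lemma negaShift_pow_apply (v : ℕ) (hv : 0 < v) :
    ∀ k, k ≤ v → ∀ i j : Fin v, ((negaShift v)^k) i j =
      if (i:ℕ) + k = j then 1 else if (i:ℕ) + k = (j:ℕ) + v then -1 else 0 := by
  intro k
  induction k with
  | zero =>
    intro _ i j
    have hj := j.isLt
    rw [pow_zero]
    simp only [Matrix.one_apply, Fin.ext_iff]
    split_ifs <;> omega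
  | succ k ih =>
    intro hk i j
    have hj := j.isLt
    have hiv := i.isLt
    rw [pow_succ', Matrix.mul_apply]
    rcases Nat.lt_or_ge ((i:ℕ)+1) v with hi | hi
    · rw [Finset.sum_eq_single (⟨(i:ℕ)+1, hi⟩ : Fin v)]
      · rw [negaShift_apply_succ v i hi, one_mul, ih (by omega)]
        simp only [Fin.val_mk]
        split_ifs <;> omega
      · intro m _ hm
        rw [negaShift_apply_ne_succ v hv i m, zero_mul]
        rw [Nat.mod_eq_of_lt hi]
        intro hh; exact hm (Fin.ext hh)
      · intro h; exact absurd (Finset.mem_univ _) h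
    · have hi' : (i:ℕ) + 1 = v := by omega
      rw [Finset.sum_eq_single (⟨0, hv⟩ : Fin v)]
      · rw [negaShift_apply_zero v hv i hi', ih (by omega)]
        simp only [Fin.val_mk, Nat.zero_add]
        split_ifs <;> omega
      · intro m _ hm
        rw [negaShift_apply_ne_succ v hv i m, zero_mul]
        rw [hi', Nat.mod_self]
        intro hh; exact hm (Fin.ext hh)
      · intro h; exact absurd (Finset.mem_univ _) h

lemma negaShift_pow_v (v : ℕ) (hv : 0 < v) : (negaShift v)^v = -1 := by
  ext i j
  rw [negaShift_pow_apply v hv v le_rfl]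
  have hj := j.isLt
  have hi := i.isLt
  simp only [Matrix.neg_apply, Matrix.one_apply, Fin.ext_iff]
  split_ifs <;> omega

lemma negaShift_mul_transpose (v : ℕ) (hv : 0 < v) :
    negaShift v * (negaShift v)ᵀ = 1 := by
  ext i j
  rw [Matrix.mul_apply]
  have hj := j.isLt
  have hiv := i.isLt
  rcases Nat.lt_or_ge ((i:ℕ)+1) v with hi | hi
  · rw [Finset.sum_eq_single (⟨(i:ℕ)+1, hi⟩ : Fin v)]
    · rw [negaShift_apply_succ v i hi, one_mul, Matrix.transpose_apply, Matrix.one_apply]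
      by_cases h : j = i
      · subst h; rw [negaShift_apply_succ v j hi, if_pos rfl]
      · rw [negaShift_apply_ne_succ v hv j _, if_neg (fun hh => h hh.symm)]
        simp only [Fin.val_mk]
        intro hh
        rcases Nat.lt_or_ge ((j:ℕ)+1) v with h1 | h1
        · rw [Nat.mod_eq_of_lt h1] at hh; exact h (Fin.ext (by omega))
        · rw [(by omega : (j:ℕ)+1 = v), Nat.mod_self] at hh; omega
    · intro m _ hm
      rw [negaShift_apply_ne_succ v hv i m, zero_mul]
      rw [Nat.mod_eq_of_lt hi]
      intro hh; exact hm (Fin.ext hh)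
    · intro h; exact absurd (Finset.mem_univ _) h
  · have hi' : (i:ℕ) + 1 = v := by omega
    rw [Finset.sum_eq_single (⟨0, hv⟩ : Fin v)]
    · rw [negaShift_apply_zero v hv i hi', Matrix.transpose_apply, Matrix.one_apply]
      by_cases h : j = i
      · subst h; rw [negaShift_apply_zero v hv j hi', if_pos rfl]; ring
      · rw [negaShift_apply_ne_succ v hv j _, if_neg (fun hh => h hh.symm), mul_zero]
        simp only [Fin.val_mk]
        intro hh
        rcases Nat.lt_or_ge ((j:ℕ)+1) v with h1 | h1
        · rw [Nat.mod_eq_of_lt h1] at hh; omega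
        · exact h (Fin.ext (by omega))
    · intro m _ hm
      rw [negaShift_apply_ne_succ v hv i m, zero_mul]
      rw [hi', Nat.mod_self]
      intro hh; exact hm (Fin.ext hh)
    · intro h; exact absurd (Finset.mem_univ _) h

-- ===== algebraic lemmas =====

lemma negaShift_pow_mul_transpose_pow (v : ℕ) (hv : 0 < v) (k : ℕ) :
    (negaShift v)^k * ((negaShift v)ᵀ)^k = 1 := by
  induction k with
  | zero => simp
  | succ k ih =>
    rw [pow_succ, pow_succ', ← mul_assoc, mul_assoc ((negaShift v)^k),
      negaShift_mul_transpose v hv, mul_one, ih]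

lemma transpose_pow_eq (v : ℕ) (hv : 0 < v) (k : ℕ) (h1 : 0 < k) (h2 : k ≤ v) :
    ((negaShift v)ᵀ)^k = -(negaShift v)^(v-k) := by
  have e1 : (-(negaShift v)^(v-k)) * (negaShift v)^k = 1 := by
    rw [neg_mul, ← pow_add, (by omega : v - k + k = v), negaShift_pow_v v hv, neg_neg]
  calc ((negaShift v)ᵀ)^k = 1 * ((negaShift v)ᵀ)^k := (one_mul _).symm
    _ = -(negaShift v)^(v-k) * ((negaShift v)^k * ((negaShift v)ᵀ)^k) := by
        rw [← mul_assoc, e1]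
    _ = -(negaShift v)^(v-k) := by rw [negaShift_pow_mul_transpose_pow v hv k, mul_one]

lemma pow_mul_transpose_pow (v : ℕ) (hv : 0 < v) (i j : ℕ) (hi : i < v) (hj : j < v) :
    (negaShift v)^i * ((negaShift v)ᵀ)^j =
      if j ≤ i then (negaShift v)^(i-j) else -(negaShift v)^(v+i-j) := by
  rcases le_or_gt j i with h | h
  · rw [if_pos h]
    conv_lhs => rw [(by omega : i = (i-j)+j), pow_add, mul_assoc,
      negaShift_pow_mul_transpose_pow v hv j, mul_one]
  · rw [if_neg (not_le.mpr h)]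
    have e : ((negaShift v)ᵀ)^j = ((negaShift v)ᵀ)^i * ((negaShift v)ᵀ)^(j-i) := by
      rw [← pow_add]; congr 1; omega
    rw [e, ← mul_assoc, negaShift_pow_mul_transpose_pow v hv i, one_mul,
      transpose_pow_eq v hv (j-i) (by omega) (by omega)]
    congr 2
    omega

lemma negacyclic_transpose {v : ℕ} (a : Fin v → ℤ) :
    (negacyclic a)ᵀ = ∑ i ∈ range v, ext a i • ((negaShift v)ᵀ)^i := by
  unfold negacyclic
  rw [Matrix.transpose_sum]
  exact Finset.sum_congr rfl fun i _ => by rw [Matrix.transpose_smul, Matrix.transpose_pow]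

lemma commute_negaShift_transpose (v : ℕ) (hv : 0 < v) :
    Commute (negaShift v) (negaShift v)ᵀ := by
  have h1 := negaShift_mul_transpose v hv
  have h2 : (negaShift v)ᵀ * negaShift v = 1 := mul_eq_one_comm.mp h1
  unfold Commute SemiconjBy
  rw [h1, h2]

lemma commute_negacyclic_left {v : ℕ} (a : Fin v → ℤ) (X : Matrix (Fin v) (Fin v) ℤ)
    (h : Commute (negaShift v) X) : Commute (negacyclic a) X :=
  Commute.sum_left _ _ _ (fun i _ => ((h.pow_left i).smul_left _))

lemma commute_negacyclic_transpose_left (v : ℕ) (hv : 0 < v) (a : Fin v → ℤ)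
    (X : Matrix (Fin v) (Fin v) ℤ)
    (h : Commute (negaShift v) X) (h2 : Commute (negaShift v)ᵀ X) :
    Commute (negacyclic a)ᵀ X := by
  rw [negacyclic_transpose]
  exact Commute.sum_left _ _ _ (fun i _ => ((h2.pow_left i).smul_left _))

lemma commute_transpose {v : ℕ} {X Y : Matrix (Fin v) (Fin v) ℤ} (h : Commute X Y) :
    Commute Xᵀ Yᵀ := by
  unfold Commute SemiconjBy at *
  rw [← Matrix.transpose_mul, ← Matrix.transpose_mul, h]

lemma commute_N_negacyclic {v : ℕ} (a : Fin v → ℤ) :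
    Commute (negaShift v) (negacyclic a) :=
  (commute_negacyclic_left a _ (Commute.refl _)).symm

lemma commute_NT_negacyclic (v : ℕ) (hv : 0 < v) (a : Fin v → ℤ) :
    Commute (negaShift v)ᵀ (negacyclic a) :=
  (commute_negacyclic_left a _ (commute_negaShift_transpose v hv)).symm

lemma commute_N_negacyclicT (v : ℕ) (hv : 0 < v) (a : Fin v → ℤ) :
    Commute (negaShift v) (negacyclic a)ᵀ :=
  (commute_negacyclic_transpose_left v hv a _
    (Commute.refl _) (commute_negaShift_transpose v hv).symm).symm

lemma commute_all (v : ℕ) (hv : 0 < v) (a b : Fin v → ℤ) :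
    Commute (negacyclic a) (negacyclic b) :=
  commute_negacyclic_left a _ (commute_N_negacyclic b)

lemma commute_allT (v : ℕ) (hv : 0 < v) (a b : Fin v → ℤ) :
    Commute (negacyclic a) (negacyclic b)ᵀ :=
  commute_negacyclic_left a _ (commute_N_negacyclicT v hv b)

lemma commute_allTT (v : ℕ) (hv : 0 < v) (a b : Fin v → ℤ) :
    Commute (negacyclic a)ᵀ (negacyclic b)ᵀ :=
  commute_negacyclic_transpose_left v hv a _
    (commute_N_negacyclicT v hv b) (commute_transpose (commute_N_negacyclic b))

-- ===== the correlation identity =====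

lemma negacyclic_mul_transpose (v : ℕ) (hv : 0 < v) (a : Fin v → ℤ) :
    negacyclic a * (negacyclic a)ᵀ = ∑ d ∈ range v, NAF v (ext a) d • (negaShift v)^d := by
  have hF : negacyclic a * (negacyclic a)ᵀ
      = ∑ p ∈ (range v ×ˢ range v), (ext a p.1 * ext a p.2) •
          (if p.2 ≤ p.1 then (negaShift v)^(p.1-p.2) else -(negaShift v)^(v+p.1-p.2)) := by
    rw [negacyclic_transpose]
    unfold negacyclic
    rw [Finset.sum_mul_sum, Finset.sum_product]
    refine Finset.sum_congr rfl fun i hi => Finset.sum_congr rfl fun j hj => ?_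
    rw [smul_mul_assoc, mul_smul_comm, smul_smul,
      pow_mul_transpose_pow v hv i j (mem_range.mp hi) (mem_range.mp hj)]
  have part1 : (∑ p ∈ (range v ×ˢ range v).filter (fun p => p.2 ≤ p.1),
      (ext a p.1 * ext a p.2) •
        (if p.2 ≤ p.1 then (negaShift v)^(p.1-p.2) else -(negaShift v)^(v+p.1-p.2)))
      = ∑ d ∈ range v, AF v (ext a) d • (negaShift v)^d := by
    have e1 : ∀ d ∈ range v, AF v (ext a) d • (negaShift v)^d
        = ∑ j ∈ range (v - d), (ext a j * ext a (j + d)) • (negaShift v)^d := by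
      intro d _; rw [AF, Finset.sum_smul]
    rw [Finset.sum_congr rfl e1, Finset.sum_sigma']
    refine Finset.sum_nbij' (fun p => (⟨p.1 - p.2, p.2⟩ : Σ _ : ℕ, ℕ))
      (fun q => (q.2 + q.1, q.2)) ?_ ?_ ?_ ?_ ?_
    · rintro ⟨p1, p2⟩ hp
      simp only [Finset.mem_filter, Finset.mem_product, Finset.mem_range] at hp
      simp only [Finset.mem_sigma, Finset.mem_range]
      omega
    · rintro ⟨d, x⟩ hq
      simp only [Finset.mem_sigma, Finset.mem_range] at hq
      simp only [Finset.mem_filter, Finset.mem_product, Finset.mem_range]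
      omega
    · rintro ⟨p1, p2⟩ hp
      simp only [Finset.mem_filter, Finset.mem_product, Finset.mem_range] at hp
      dsimp only
      rw [Nat.add_sub_cancel' hp.2]
    · rintro ⟨d, x⟩ hq
      simp only [Finset.mem_sigma, Finset.mem_range] at hq
      dsimp only
      rw [(by omega : x + d - x = d)]
    · rintro ⟨p1, p2⟩ hp
      simp only [Finset.mem_filter, Finset.mem_product, Finset.mem_range] at hp
      rw [if_pos hp.2]
      dsimp only
      rw [Nat.add_sub_cancel' hp.2, mul_comm]
  have part2 : (∑ p ∈ (range v ×ˢ range v).filter (fun p => ¬ p.2 ≤ p.1),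
      (ext a p.1 * ext a p.2) •
        (if p.2 ≤ p.1 then (negaShift v)^(p.1-p.2) else -(negaShift v)^(v+p.1-p.2)))
      = ∑ d ∈ range v, AF v (ext a) (v - d) • (-(negaShift v)^d) := by
    have e2 : ∀ d ∈ range v, AF v (ext a) (v - d) • (-(negaShift v)^d)
        = ∑ i ∈ range d, (ext a i * ext a (i + (v - d))) • (-(negaShift v)^d) := by
      intro d hd
      have hd' := mem_range.mp hd
      rw [AF, (by omega : v - (v - d) = d), Finset.sum_smul]
    rw [Finset.sum_congr rfl e2, Finset.sum_sigma']
    refine Finset.sum_nbij' (fun p => (⟨v + p.1 - p.2, p.1⟩ : Σ _ : ℕ, ℕ))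
      (fun q => (q.2, q.2 + v - q.1)) ?_ ?_ ?_ ?_ ?_
    · rintro ⟨p1, p2⟩ hp
      simp only [Finset.mem_filter, Finset.mem_product, Finset.mem_range] at hp
      simp only [Finset.mem_sigma, Finset.mem_range]
      omega
    · rintro ⟨d, x⟩ hq
      simp only [Finset.mem_sigma, Finset.mem_range] at hq
      simp only [Finset.mem_filter, Finset.mem_product, Finset.mem_range]
      omega
    · rintro ⟨p1, p2⟩ hp
      simp only [Finset.mem_filter, Finset.mem_product, Finset.mem_range] at hp
      dsimp only
      rw [(by omega : p1 + v - (v + p1 - p2) = p2)]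
    · rintro ⟨d, x⟩ hq
      simp only [Finset.mem_sigma, Finset.mem_range] at hq
      dsimp only
      rw [(by omega : v + x - (x + v - d) = d)]
    · rintro ⟨p1, p2⟩ hp
      simp only [Finset.mem_filter, Finset.mem_product, Finset.mem_range] at hp
      rw [if_neg hp.2]
      dsimp only
      rw [(by omega : p1 + (v - (v + p1 - p2)) = p2)]
  rw [hF, ← Finset.sum_filter_add_sum_filter_not (range v ×ˢ range v) (fun p => p.2 ≤ p.1),
    part1, part2, ← Finset.sum_add_distrib]
  refine Finset.sum_congr rfl fun d hd => ?_
  rw [smul_neg, ← sub_eq_add_neg, ← sub_smul]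
  rfl

-- ===== coefficient extraction and entry formulas =====

lemma sum_smul_pow_apply (v : ℕ) (hv : 0 < v) (c : ℕ → ℤ) (j : Fin v) :
    (∑ d ∈ range v, c d • (negaShift v)^d) ⟨0, hv⟩ j = c j := by
  rw [Matrix.sum_apply]
  rw [Finset.sum_eq_single_of_mem (j:ℕ) (mem_range.mpr j.isLt)]
  · rw [Matrix.smul_apply, negaShift_pow_apply v hv (j:ℕ) (le_of_lt j.isLt) _ j]
    simp only [Fin.val_mk]
    rw [if_pos (Nat.zero_add _), smul_eq_mul, mul_one]
  · intro d hd hne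
    have hd' := mem_range.mp hd
    have hjv := j.isLt
    rw [Matrix.smul_apply, negaShift_pow_apply v hv d (le_of_lt hd') _ j]
    simp only [Fin.val_mk]
    rw [if_neg (by omega), if_neg (by omega), smul_zero]

lemma negacyclic_apply (v : ℕ) (hv : 0 < v) (a : Fin v → ℤ) (i j : Fin v) :
    negacyclic a i j = if h : (i:ℕ) ≤ (j:ℕ) then a ⟨(j:ℕ)-(i:ℕ), by have := j.isLt; omega⟩
      else -a ⟨v+(j:ℕ)-(i:ℕ), by have := j.isLt; have := i.isLt; omega⟩ := by
  have hjv := j.isLt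
  have hiv := i.isLt
  unfold negacyclic
  rw [Matrix.sum_apply]
  by_cases hij : (i:ℕ) ≤ (j:ℕ)
  · rw [dif_pos hij, Finset.sum_eq_single_of_mem ((j:ℕ) - (i:ℕ)) (mem_range.mpr (by omega))]
    · rw [Matrix.smul_apply, negaShift_pow_apply v hv _ (by omega) i j]
      have hc : (i:ℕ) + ((j:ℕ) - (i:ℕ)) = (j:ℕ) := by omega
      rw [if_pos hc, smul_eq_mul, mul_one, ext_lt a _ (show (j:ℕ) - (i:ℕ) < v by omega)]
    · intro d hd hne
      have hd' := mem_range.mp hd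
      rw [Matrix.smul_apply, negaShift_pow_apply v hv d (le_of_lt hd') i j]
      rw [if_neg (by omega), if_neg (by omega), smul_zero]
  · rw [dif_neg hij, Finset.sum_eq_single_of_mem (v+(j:ℕ)-(i:ℕ)) (mem_range.mpr (by omega))]
    · rw [Matrix.smul_apply, negaShift_pow_apply v hv _ (by omega) i j]
      have hc1 : ¬ ((i:ℕ) + (v+(j:ℕ)-(i:ℕ)) = (j:ℕ)) := by omega
      have hc2 : (i:ℕ) + (v+(j:ℕ)-(i:ℕ)) = (j:ℕ) + v := by omega
      rw [if_neg hc1, if_pos hc2, ext_lt a _ (show v+(j:ℕ)-(i:ℕ) < v by omega),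
        smul_eq_mul, mul_neg_one]
    · intro d hd hne
      have hd' := mem_range.mp hd
      rw [Matrix.smul_apply, negaShift_pow_apply v hv d (le_of_lt hd') i j]
      rw [if_neg (by omega), if_neg (by omega), smul_zero]

lemma negacyclic_entry_pm (v : ℕ) (hv : 0 < v) (a : Fin v → ℤ)
    (ha : ∀ i, a i = 1 ∨ a i = -1) (i j : Fin v) :
    negacyclic a i j = 1 ∨ negacyclic a i j = -1 := by
  rw [negacyclic_apply v hv a i j]
  split_ifs
  · exact ha _
  · rcases ha ⟨v+(j:ℕ)-(i:ℕ), by have := j.isLt; have := i.isLt; omega⟩ with h | h <;>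
      rw [h] <;> [right; left] <;> ring

lemma negacyclic_row_zero (v : ℕ) (hv : 0 < v) (a : Fin v → ℤ) (j : Fin v) :
    negacyclic a ⟨0, hv⟩ j = a j := by
  rw [negacyclic_apply v hv a ⟨0, hv⟩ j, dif_pos (Nat.zero_le _)]
  exact congrArg a (Fin.ext (by simp))

lemma NAF_zero_of_pm (v : ℕ) (hv : 0 < v) (a : Fin v → ℤ)
    (ha : ∀ i, a i = 1 ∨ a i = -1) : NAF v (ext a) 0 = (v:ℤ) := by
  rw [NAF, Nat.sub_zero, AF, AF, Nat.sub_self, Finset.range_zero, Finset.sum_empty,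
    sub_zero, Nat.sub_zero]
  have e : ∀ i ∈ range v, ext a i * ext a (i + 0) = 1 := by
    intro i hi
    have hi' := mem_range.mp hi
    rw [Nat.add_zero, ext_lt a i hi']
    rcases ha ⟨i, hi'⟩ with h | h <;> rw [h] <;> ring
  rw [Finset.sum_congr rfl e, Finset.sum_const, card_range, nsmul_eq_mul, mul_one]

end NGAux
section NGMain
open Matrix Finset

lemma twoNBlock_row0a (v : ℕ) (hv : 0 < v) (a b : Fin v → ℤ) (j : Fin v) :
    twoNBlock a b (Sum.inl ⟨0, hv⟩) (Sum.inl j) = a j := by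
  simp only [twoNBlock, Matrix.fromBlocks_apply₁₁]
  exact negacyclic_row_zero v hv a j

lemma twoNBlock_row0b (v : ℕ) (hv : 0 < v) (a b : Fin v → ℤ) (j : Fin v) :
    twoNBlock a b (Sum.inl ⟨0, hv⟩) (Sum.inr j) = b j := by
  simp only [twoNBlock, Matrix.fromBlocks_apply₁₂]
  exact negacyclic_row_zero v hv b j

lemma diag_block_sum (v : ℕ) (hv : 0 < v) (a b : Fin v → ℤ) :
    negacyclic a * (negacyclic a)ᵀ + negacyclic b * (negacyclic b)ᵀ
      = ∑ d ∈ range v, (NAF v (ext a) d + NAF v (ext b) d) • (negaShift v)^d := by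
  rw [negacyclic_mul_transpose v hv a, negacyclic_mul_transpose v hv b,
    ← Finset.sum_add_distrib]
  exact Finset.sum_congr rfl fun d _ => (add_smul _ _ _).symm

lemma twoNBlock_mul_transpose (v : ℕ) (hv : 0 < v) (a b : Fin v → ℤ) :
    twoNBlock a b * (twoNBlock a b)ᵀ =
      Matrix.fromBlocks
        (negacyclic a * (negacyclic a)ᵀ + negacyclic b * (negacyclic b)ᵀ) 0 0
        (negacyclic a * (negacyclic a)ᵀ + negacyclic b * (negacyclic b)ᵀ) := by
  rw [twoNBlock, Matrix.fromBlocks_transpose]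
  simp only [Matrix.transpose_neg, Matrix.transpose_transpose]
  rw [Matrix.fromBlocks_multiply]
  rw [mul_neg, (commute_all v hv a b).eq, neg_add_cancel,
    neg_mul, (commute_allTT v hv b a).eq, neg_add_cancel,
    neg_mul_neg, ← (commute_allT v hv a a).eq, ← (commute_allT v hv b b).eq,
    add_comm (negacyclic b * (negacyclic b)ᵀ) (negacyclic a * (negacyclic a)ᵀ)]

theorem ngpair_equiv_2N_hadamard' (v : ℕ) (hv : 0 < v) :
    (∀ a b : Fin v → ℤ, IsNGPair a b → IsHadamard2v (twoNBlock a b)) ∧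
    Set.BijOn (fun p : (Fin v → ℤ) × (Fin v → ℤ) => twoNBlock p.1 p.2)
      {p | IsNGPair p.1 p.2}
      {M | IsHadamard2v M ∧ ∃ a b : Fin v → ℤ, M = twoNBlock a b} := by
  have fwd : ∀ a b : Fin v → ℤ, IsNGPair a b → IsHadamard2v (twoNBlock a b) := by
    rintro a b ⟨ha, hb, hnaf⟩
    constructor
    · rintro (i | i) (j | j)
      · simp only [twoNBlock, Matrix.fromBlocks_apply₁₁]
        exact negacyclic_entry_pm v hv a ha i j
      · simp only [twoNBlock, Matrix.fromBlocks_apply₁₂]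
        exact negacyclic_entry_pm v hv b hb i j
      · simp only [twoNBlock, Matrix.fromBlocks_apply₂₁, Matrix.neg_apply,
          Matrix.transpose_apply]
        rcases negacyclic_entry_pm v hv b hb j i with h | h <;> rw [h] <;> [right; left] <;> ring
      · simp only [twoNBlock, Matrix.fromBlocks_apply₂₂, Matrix.transpose_apply]
        exact negacyclic_entry_pm v hv a ha j i
    · have hAA : negacyclic a * (negacyclic a)ᵀ + negacyclic b * (negacyclic b)ᵀ
          = ((2 * v : ℕ) : ℤ) • (1 : Matrix (Fin v) (Fin v) ℤ) := by
        rw [diag_block_sum v hv a b,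
          Finset.sum_eq_single_of_mem 0 (mem_range.mpr hv)]
        · rw [pow_zero, NAF_zero_of_pm v hv a ha, NAF_zero_of_pm v hv b hb]
          congr 1
          push_cast
          ring
        · intro d hd hne
          rw [hnaf d (Nat.pos_of_ne_zero hne) (mem_range.mp hd), zero_smul]
      rw [twoNBlock_mul_transpose v hv a b, hAA, ← Matrix.fromBlocks_one,
        Matrix.fromBlocks_smul, smul_zero]
  have bwd : ∀ a b : Fin v → ℤ, IsHadamard2v (twoNBlock a b) → IsNGPair a b := by
    rintro a b ⟨hpm, hprod⟩
    have ha : ∀ i, a i = 1 ∨ a i = -1 := fun i => by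
      rw [← twoNBlock_row0a v hv a b i]; exact hpm _ _
    have hb : ∀ i, b i = 1 ∨ b i = -1 := fun i => by
      rw [← twoNBlock_row0b v hv a b i]; exact hpm _ _
    refine ⟨ha, hb, ?_⟩
    intro k hk hkv
    rw [twoNBlock_mul_transpose v hv a b] at hprod
    have hTL : negacyclic a * (negacyclic a)ᵀ + negacyclic b * (negacyclic b)ᵀ
        = ((2 * v : ℕ) : ℤ) • (1 : Matrix (Fin v) (Fin v) ℤ) := by
      ext i j
      have h1 := congrFun (congrFun hprod (Sum.inl i)) (Sum.inl j)
      rw [Matrix.fromBlocks_apply₁₁, Matrix.smul_apply, Matrix.one_apply] at h1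
      rw [Matrix.smul_apply, Matrix.one_apply]
      rw [h1]
      by_cases hij : i = j
      · rw [if_pos hij, if_pos (by rw [hij])]
      · rw [if_neg hij, if_neg (by intro hh; exact hij (Sum.inl_injective hh))]
    rw [diag_block_sum v hv a b] at hTL
    have h2 := congrFun (congrFun hTL ⟨0, hv⟩) ⟨k, hkv⟩
    have hne : ¬ ((⟨0, hv⟩ : Fin v) = ⟨k, hkv⟩) := by
      intro hh
      have := congrArg Fin.val hh
      simp only [Fin.val_mk] at this
      omega
    rw [sum_smul_pow_apply v hv _ ⟨k, hkv⟩, Matrix.smul_apply, Matrix.one_apply,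
      if_neg hne, smul_zero] at h2
    exact h2
  refine ⟨fwd, ?_, ?_, ?_⟩
  · intro p hp
    exact ⟨fwd p.1 p.2 hp, p.1, p.2, rfl⟩
  · intro p hp q hq hpq
    have h1 : p.1 = q.1 := funext fun j => by
      rw [← twoNBlock_row0a v hv p.1 p.2 j, ← twoNBlock_row0a v hv q.1 q.2 j]
      exact congrFun (congrFun hpq (Sum.inl ⟨0, hv⟩)) (Sum.inl j)
    have h2 : p.2 = q.2 := funext fun j => by
      rw [← twoNBlock_row0b v hv p.1 p.2 j, ← twoNBlock_row0b v hv q.1 q.2 j]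
      exact congrFun (congrFun hpq (Sum.inl ⟨0, hv⟩)) (Sum.inr j)
    exact Prod.ext h1 h2
  · rintro M ⟨hM, a, b, rfl⟩
    exact ⟨(a, b), bwd a b hM, rfl⟩

end NGMain

/-- an NG-pair `(a,b)` of length `v` yields a 2N-type Hadamard matrix
`[[A,B],[-Bᵀ,Aᵀ]]` of order `2v`, and the map `(a,b) ↦ H` is a bijection from NG-pairs
onto the set of Hadamard matrices of this form. -/
theorem ngpair_equiv_2N_hadamard (v : ℕ) (hv : 0 < v) :
    (∀ a b : Fin v → ℤ, IsNGPair a b → IsHadamard2v (twoNBlock a b)) ∧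
    Set.BijOn (fun p : (Fin v → ℤ) × (Fin v → ℤ) => twoNBlock p.1 p.2)
      {p | IsNGPair p.1 p.2}
      {M | IsHadamard2v M ∧ ∃ a b : Fin v → ℤ, M = twoNBlock a b} := by
  exact ngpair_equiv_2N_hadamard' v hv
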